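/- Let n ≥ 1 and consider polynomials over 𝔽₃ of the form f = ∏_{e ∈ E} (x_{i(e)} + ε(e)·x_{j(e)} - a(e)) where E is a multiset of size l of 'edges', each with i(e) < j(e) in [n], ε(e) ∈ {1,-1}, a(e) ∈ 𝔽₃. If the number of nonzeros of f on 𝔽₃ⁿ is positive and 2n ≥ l, then the number of nonzeros of f on 𝔽₃ⁿ is at least ⌈3^(n - l/2)⌉. -/

import Mathlib

open MvPolynomial Finset

/-!
The product `f` has total degree at most `l` and does not vanish on all of `𝔽₃ⁿ`. Reducing its
exponents with `c ^ 3 = c` gives a nonzero polynomial with the same values, individual degrees at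
most `2` and total degree still at most `l`. For such a polynomial an Alon–Füredi type induction on
`n` gives at least `B (2n - l)` nonzeros, where `B (2k) = 3 ^ k` and `B (2k + 1) = 2 * 3 ^ k`:
viewed as a polynomial of degree `d ≤ 2` in the first variable, it has at least `3 - d` nonzeros
on every line over a point where its leading coefficient does not vanish, and
`B (e + 2 - d) ≤ (3 - d) * B e`.
Finally `⌈3 ^ (n - l / 2)⌉ ≤ B (2n - l)` since `√3 ≤ 2`.
-/

namespace AlonFuredi

def nonzeroBound (e : ℕ) : ℕ := 2 ^ (e % 2) * 3 ^ (e / 2)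

lemma nonzeroBound_two_mul (k : ℕ) : nonzeroBound (2 * k) = 3 ^ k := by
  simp [nonzeroBound]

lemma nonzeroBound_two_mul_add_one (k : ℕ) : nonzeroBound (2 * k + 1) = 2 * 3 ^ k := by
  rw [nonzeroBound, show (2 * k + 1) % 2 = 1 by omega, show (2 * k + 1) / 2 = k by omega, pow_one]

lemma nonzeroBound_le_succ (e : ℕ) : nonzeroBound e ≤ nonzeroBound (e + 1) := by
  obtain ⟨k, rfl | rfl⟩ := Nat.even_or_odd' e
  · rw [nonzeroBound_two_mul, nonzeroBound_two_mul_add_one]; omega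
  · rw [show 2 * k + 1 + 1 = 2 * (k + 1) by ring, nonzeroBound_two_mul,
      nonzeroBound_two_mul_add_one, pow_succ]; omega

lemma nonzeroBound_succ_le (e : ℕ) : nonzeroBound (e + 1) ≤ 2 * nonzeroBound e := by
  obtain ⟨k, rfl | rfl⟩ := Nat.even_or_odd' e
  · rw [nonzeroBound_two_mul, nonzeroBound_two_mul_add_one]
  · rw [show 2 * k + 1 + 1 = 2 * (k + 1) by ring, nonzeroBound_two_mul,
      nonzeroBound_two_mul_add_one, pow_succ]; omega

lemma nonzeroBound_add_two (e : ℕ) : nonzeroBound (e + 2) = 3 * nonzeroBound e := by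
  rw [nonzeroBound, nonzeroBound, Nat.add_mod_right, Nat.add_div_right _ two_pos, pow_succ]
  ring

lemma nonzeroBound_mono : Monotone nonzeroBound := monotone_nat_of_le_succ nonzeroBound_le_succ

lemma nonzeroBound_add_two_sub_le {d : ℕ} (hd : d ≤ 2) (e : ℕ) :
    nonzeroBound (e + (2 - d)) ≤ (3 - d) * nonzeroBound e := by
  interval_cases d
  · exact (nonzeroBound_add_two e).le
  · exact nonzeroBound_succ_le e
  · simp

lemma ceil_rpow_le_nonzeroBound (e : ℕ) : ⌈(3 : ℝ) ^ ((e : ℝ) / 2)⌉₊ ≤ nonzeroBound e := by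
  obtain ⟨k, rfl | rfl⟩ := Nat.even_or_odd' e
  · rw [nonzeroBound_two_mul, show ((2 * k : ℕ) : ℝ) / 2 = k by push_cast; ring,
      Real.rpow_natCast]
    exact_mod_cast (Nat.ceil_natCast (3 ^ k)).le
  · rw [nonzeroBound_two_mul_add_one, Nat.ceil_le,
      show ((2 * k + 1 : ℕ) : ℝ) / 2 = k + 2⁻¹ by push_cast; ring,
      Real.rpow_add three_pos, Real.rpow_natCast]
    have hsqrt : (3 : ℝ) ^ (2⁻¹ : ℝ) ≤ 2 := by
      rw [Real.rpow_inv_le_iff_of_pos] <;> norm_num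
    push_cast
    nlinarith [pow_pos (three_pos : (0 : ℝ) < 3) k]

section Reduction

variable {K σ : Type*} [Field K] [Fintype K]

def reduceExp (q k : ℕ) : ℕ := if k = 0 then 0 else (k - 1) % (q - 1) + 1

lemma reduceExp_zero (q : ℕ) : reduceExp q 0 = 0 := if_pos rfl

lemma reduceExp_le_self (q k : ℕ) : reduceExp q k ≤ k := by
  unfold reduceExp
  split_ifs
  · omega
  · have := Nat.mod_le (k - 1) (q - 1); omega

lemma reduceExp_le_card_sub_one (k : ℕ) : reduceExp (Fintype.card K) k ≤ Fintype.card K - 1 := by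
  unfold reduceExp
  split_ifs
  · omega
  · have := Nat.mod_lt (k - 1) (show 0 < Fintype.card K - 1 by
      have := Fintype.one_lt_card (α := K); omega)
    omega

lemma pow_reduceExp (c : K) (k : ℕ) : c ^ reduceExp (Fintype.card K) k = c ^ k := by
  unfold reduceExp
  split_ifs with hk
  · rw [hk]
  rcases eq_or_ne c 0 with rfl | hc
  · rw [zero_pow hk, zero_pow (Nat.succ_ne_zero _)]
  · rw [pow_succ, ← pow_eq_pow_mod _ (FiniteField.pow_card_sub_one_eq_one c hc), ← pow_succ,
      Nat.sub_add_cancel (Nat.one_le_iff_ne_zero.mpr hk)]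

noncomputable def reduce (p : MvPolynomial σ K) : MvPolynomial σ K :=
  ∑ m ∈ p.support,
    monomial (m.mapRange (reduceExp (Fintype.card K)) (reduceExp_zero _)) (coeff m p)

lemma eval_reduce (p : MvPolynomial σ K) (x : σ → K) : eval x (reduce p) = eval x p := by
  rw [reduce, map_sum, eval_eq]
  refine sum_congr rfl fun m _ => ?_
  rw [eval_monomial, Finsupp.prod_mapRange_index fun _ => pow_zero _]
  simp only [Finsupp.prod, pow_reduceExp]

lemma degreeOf_reduce_le (p : MvPolynomial σ K) (i : σ) :
    (reduce p).degreeOf i ≤ Fintype.card K - 1 := by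
  classical
  rw [degreeOf_le_iff]
  intro m hm
  obtain ⟨m₀, -, hm₀⟩ := mem_biUnion.mp (support_sum hm)
  rw [mem_singleton.mp (support_monomial_subset hm₀), Finsupp.mapRange_apply]
  exact reduceExp_le_card_sub_one _

lemma totalDegree_reduce_le (p : MvPolynomial σ K) : (reduce p).totalDegree ≤ p.totalDegree := by
  refine (totalDegree_finsetSum _ _).trans (Finset.sup_le fun m hm => ?_)
  refine (totalDegree_monomial_le _ _).trans (le_trans ?_ (le_totalDegree hm))
  rw [Finsupp.sum_mapRange_index fun _ => rfl]
  exact sum_le_sum fun i _ => reduceExp_le_self _ _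

end Reduction

lemma card_filter_fin_succ {K : Type*} [Fintype K] {n : ℕ} (P : (Fin (n + 1) → K) → Prop)
    [DecidablePred P] :
    #{y | P y} = ∑ x : Fin n → K, #{c | P (Fin.cons c x)} := by
  simp only [card_filter]
  rw [← (Fin.consEquiv fun _ => K).sum_comp, Fintype.sum_prod_type_right]
  rfl

section Fibres

variable {K : Type*} [Field K] [Fintype K] [DecidableEq K]

lemma card_sub_natDegree_le_card_nonroots {q : Polynomial K} (hq : q ≠ 0) :
    Fintype.card K - q.natDegree ≤ #{c | q.eval c ≠ 0} := by
  have hroots : #{c | q.eval c = 0} ≤ q.natDegree :=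
    Polynomial.card_le_degree_of_subset_roots fun c hc => by
      rw [Polynomial.mem_roots hq]
      exact (mem_filter.mp hc).2
  have := card_filter_add_card_filter_not (s := univ) (p := fun c => q.eval c = 0)
  rw [card_univ] at this
  simp only [ne_eq]
  omega

lemma card_sub_natDegree_le_card_fibre {n : ℕ} (h : MvPolynomial (Fin (n + 1)) K) (x : Fin n → K)
    (hx : eval x (finSuccEquiv K n h).leadingCoeff ≠ 0) :
    Fintype.card K - (finSuccEquiv K n h).natDegree ≤ #{c | eval (Fin.cons c x) h ≠ 0} := by
  have hdeg := Polynomial.natDegree_map_of_leadingCoeff_ne_zero (eval x) hx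
  have hne : (finSuccEquiv K n h).map (eval x) ≠ 0 := fun h0 => hx <| by
    rw [← Polynomial.coeff_natDegree, ← hdeg, ← Polynomial.coeff_map, h0, Polynomial.coeff_zero]
  simpa only [hdeg, eval_eq_eval_mv_eval'] using card_sub_natDegree_le_card_nonroots hne

end Fibres

theorem nonzeroBound_le_card_of_degreeOf_le_two {n l : ℕ} {h : MvPolynomial (Fin n) (ZMod 3)}
    (h0 : h ≠ 0) (hdeg : ∀ i, h.degreeOf i ≤ 2) (htd : h.totalDegree ≤ l) :
    nonzeroBound (2 * n - l) ≤ #{x | eval x h ≠ 0} := by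
  induction n generalizing l with
  | zero =>
    obtain ⟨a, rfl⟩ := C_surjective (Fin 0) h
    have ha : a ≠ 0 := by rintro rfl; exact h0 (map_zero C)
    simp [nonzeroBound, ha]
  | succ n ih =>
    set p := finSuccEquiv (ZMod 3) n h
    set d := p.natDegree
    have hp0 : p ≠ 0 := (map_ne_zero_iff _ (finSuccEquiv (ZMod 3) n).injective).mpr h0
    have hg0 : p.leadingCoeff ≠ 0 := Polynomial.leadingCoeff_ne_zero.mpr hp0
    have hd : d ≤ 2 := (natDegree_finSuccEquiv h).trans_le (hdeg 0)
    have hgtd : p.leadingCoeff.totalDegree + d ≤ h.totalDegree :=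
      totalDegree_coeff_finSuccEquiv_add_le h d hg0
    have ihg : nonzeroBound (2 * n - (l - d)) ≤ #{x | eval x p.leadingCoeff ≠ 0} :=
      ih hg0 (fun i => (degreeOf_coeff_finSuccEquiv h i d).trans (hdeg i.succ)) (by omega)
    calc nonzeroBound (2 * (n + 1) - l)
        ≤ nonzeroBound (2 * n - (l - d) + (2 - d)) := nonzeroBound_mono (by omega)
      _ ≤ (3 - d) * nonzeroBound (2 * n - (l - d)) := nonzeroBound_add_two_sub_le hd _
      _ ≤ (3 - d) * #{x | eval x p.leadingCoeff ≠ 0} := Nat.mul_le_mul_left _ ihg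
      _ = ∑ x ∈ {x | eval x p.leadingCoeff ≠ 0}, (3 - d) := by
        rw [sum_const, smul_eq_mul, mul_comm]
      _ ≤ ∑ x ∈ {x | eval x p.leadingCoeff ≠ 0}, #{c | eval (Fin.cons c x) h ≠ 0} :=
        sum_le_sum fun x hx => by
          simpa only [ZMod.card] using card_sub_natDegree_le_card_fibre h x (mem_filter.mp hx).2
      _ ≤ ∑ x : Fin n → ZMod 3, #{c | eval (Fin.cons c x) h ≠ 0} :=
        sum_le_sum_of_subset (subset_univ _)
      _ = #{y | eval y h ≠ 0} := (card_filter_fin_succ fun y => eval y h ≠ 0).symm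

theorem nonzeroBound_le_card {n l : ℕ} {h : MvPolynomial (Fin n) (ZMod 3)} {x₀ : Fin n → ZMod 3}
    (hx₀ : eval x₀ h ≠ 0) (htd : h.totalDegree ≤ l) :
    nonzeroBound (2 * n - l) ≤ #{x | eval x h ≠ 0} := by
  have h0 : reduce h ≠ 0 := fun h0 => hx₀ <| by rw [← eval_reduce, h0, map_zero]
  simpa only [eval_reduce] using nonzeroBound_le_card_of_degreeOf_le_two h0
    (fun i => (degreeOf_reduce_le h i).trans_eq (by rw [ZMod.card]))
    ((totalDegree_reduce_le h).trans htd)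

lemma totalDegree_X_add_C_mul_X_sub_C_le {R σ : Type*} [CommRing R] (i j : σ) (c a : R) :
    (X i + C c * X j - C a : MvPolynomial σ R).totalDegree ≤ 1 := by
  refine (totalDegree_sub_C_le _ _).trans <| (totalDegree_add _ _).trans <| max_le ?_ ?_
  · exact (totalDegree_monomial_le _ _).trans (by simp)
  · rw [C_mul_X_eq_monomial]
    exact (totalDegree_monomial_le _ _).trans (by simp)

end AlonFuredi

open AlonFuredi in
theorem stmt_14_general {n l : ℕ} (i j : Fin l → Fin n)
    (ε : Fin l → ZMod 3) (a : Fin l → ZMod 3)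
    (f : MvPolynomial (Fin n) (ZMod 3))
    (hf : f = ∏ e : Fin l,
      (MvPolynomial.X (i e) + MvPolynomial.C (ε e) * MvPolynomial.X (j e)
        - MvPolynomial.C (a e)))
    (hpos : 0 < ({x : Fin n → ZMod 3 | MvPolynomial.eval x f ≠ 0}).ncard)
    (hnl : 2 * n ≥ l) :
    ⌈(3 : ℝ) ^ ((n : ℝ) - (l : ℝ) / 2)⌉₊ ≤
      ({x : Fin n → ZMod 3 | MvPolynomial.eval x f ≠ 0}).ncard := by
  obtain ⟨x₀, hx₀⟩ := Set.nonempty_of_ncard_ne_zero hpos.ne'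
  have htd : f.totalDegree ≤ l := by
    rw [hf]
    refine (totalDegree_finsetProd _ _).trans ?_
    simpa using sum_le_sum fun e (_ : e ∈ univ) =>
      totalDegree_X_add_C_mul_X_sub_C_le (i e) (j e) (ε e) (a e)
  have hexp : (n : ℝ) - (l : ℝ) / 2 = ((2 * n - l : ℕ) : ℝ) / 2 := by
    rw [Nat.cast_sub hnl]; push_cast; ring
  rw [Set.ncard_eq_toFinset_card', Set.toFinset_ofPred, hexp]
  exact (ceil_rpow_le_nonzeroBound _).trans (nonzeroBound_le_card hx₀ htd)

theorem stmt_14 {n l : ℕ} (hn : 1 ≤ n) (i j : Fin l → Fin n) (hij : ∀ e, i e < j e)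
    (ε : Fin l → ZMod 3) (hε : ∀ e, ε e = 1 ∨ ε e = -1) (a : Fin l → ZMod 3)
    (f : MvPolynomial (Fin n) (ZMod 3))
    (hf : f = ∏ e : Fin l,
      (MvPolynomial.X (i e) + MvPolynomial.C (ε e) * MvPolynomial.X (j e)
        - MvPolynomial.C (a e)))
    (hpos : 0 < ({x : Fin n → ZMod 3 | MvPolynomial.eval x f ≠ 0}).ncard)
    (hnl : 2 * n ≥ l) :
    ⌈(3 : ℝ) ^ ((n : ℝ) - (l : ℝ) / 2)⌉₊ ≤
      ({x : Fin n → ZMod 3 | MvPolynomial.eval x f ≠ 0}).ncard :=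
  stmt_14_general i j ε a f hf hpos hnl
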